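/- arXiv:1611.10068 — 6 statements merged into one kernel-verified Lean document; each statement's English description precedes it below -/
import Mathlib

section
/- For every n ≥ 3, consider the stateless protocol on the complete directed graph K_n (all ordered pairs of distinct nodes are edges) with label space Σ = {0,1}, in which each node assigns the same bit to all of its outgoing edges, ignoring its input, via the reaction function: output 0 on all outgoing edges if every incoming edge is labeled 0, and output 1 on all outgoing edges otherwise. Then the all-zeros labeling and the all-ones labeling are two distinct stable labelings, yet the protocol is label (n−2)-stabilizing: for every r < n−1, every r-fair schedule and every initial labeling, the labeling sequence is eventually constant. -/
/-- A stateless protocol on the directed graph with node set `Fin n` and edge set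
`E`, with label space `Λ`.  `react i` maps the current labeling (of which only
the values on `i`'s incoming edges may be used, per `react_local`) together with
`i`'s input bit to a new labeling (of which only the values on `i`'s outgoing
edges are ever read) together with an output bit. -/
structure StatelessProtocol (n : ℕ) (E : Finset (Fin n × Fin n)) (Λ : Type) where
  react : Fin n → ({e // e ∈ E} → Λ) → Bool → ({e // e ∈ E} → Λ) × Bool
  react_local : ∀ (i : Fin n) (ℓ ℓ' : {e // e ∈ E} → Λ) (x : Bool),
      (∀ e : {e // e ∈ E}, e.1.2 = i → ℓ e = ℓ' e) → react i ℓ x = react i ℓ' x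

namespace StatelessProtocol

variable {n : ℕ} {E : Finset (Fin n × Fin n)} {Λ : Type}

/-- `run P x σ ℓ0 t` is the labeling after `t` time steps of the run of `P` on
input `x` from initial labeling `ℓ0`, where `σ t` is the set of nodes activated
at time step `t + 1`. -/
def run (P : StatelessProtocol n E Λ) (x : Fin n → Bool) (σ : ℕ → Finset (Fin n))
    (ℓ0 : {e // e ∈ E} → Λ) : ℕ → {e // e ∈ E} → Λ
  | 0 => ℓ0
  | t + 1 => fun e =>
      if e.1.1 ∈ σ t then (P.react e.1.1 (run P x σ ℓ0 t) (x e.1.1)).1 e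
      else run P x σ ℓ0 t e

/-- A schedule is `r`-fair if every node is activated at least once in every
window of `r` consecutive time steps. -/
def Fair (σ : ℕ → Finset (Fin n)) (r : ℕ) : Prop :=
  ∀ (i : Fin n) (t : ℕ), ∃ s, t ≤ s ∧ s < t + r ∧ i ∈ σ s

/-- A labeling is stable for input `x` if every reaction function is at a fixed
point: each node's prescribed outgoing labels coincide with the current ones. -/
def Stable (P : StatelessProtocol n E Λ) (x : Fin n → Bool)
    (ℓ : {e // e ∈ E} → Λ) : Prop :=
  ∀ e : {e // e ∈ E}, (P.react e.1.1 ℓ (x e.1.1)).1 e = ℓ e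

/-- The labeling after `t` steps of the synchronous run (all nodes activated at
every step). -/
def syncRun (P : StatelessProtocol n E Λ) (x : Fin n → Bool)
    (ℓ0 : {e // e ∈ E} → Λ) : ℕ → {e // e ∈ E} → Λ :=
  P.run x (fun _ => Finset.univ) ℓ0

/-- The outputs at time step `t` of the synchronous run (the value at time `0`
is a dummy value). -/
def syncOut (P : StatelessProtocol n E Λ) (x : Fin n → Bool)
    (ℓ0 : {e // e ∈ E} → Λ) : ℕ → Fin n → Bool
  | 0 => fun _ => false
  | t + 1 => fun i => (P.react i (P.syncRun x ℓ0 t) (x i)).2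

/-- Output stabilization under the synchronous schedule. -/
def OutputStabilizing (P : StatelessProtocol n E Λ) : Prop :=
  ∀ x ℓ0, ∃ T, ∀ t, T ≤ t → P.syncOut x ℓ0 t = P.syncOut x ℓ0 T

/-- Label stabilization under the synchronous schedule. -/
def LabelStabilizing (P : StatelessProtocol n E Λ) : Prop :=
  ∀ x ℓ0, ∃ T, ∀ t, T ≤ t → P.syncRun x ℓ0 t = P.syncRun x ℓ0 T

/-- `P` computes `f` if on every input and from every initial labeling, every
node's output sequence converges to `f x` under the synchronous schedule. -/
def Computes (P : StatelessProtocol n E Λ) (f : (Fin n → Bool) → Bool) : Prop :=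
  ∀ x ℓ0, ∃ T, ∀ t, T ≤ t → ∀ i, P.syncOut x ℓ0 t i = f x

end StatelessProtocol

/-- The complete directed graph on `Fin n`. -/
def Kn (n : ℕ) : Finset (Fin n × Fin n) :=
  Finset.univ.filter (fun p => p.1 ≠ p.2)

/-- The protocol on the complete graph `K_n` with label space `{0,1}` in which a
node sends `0` on all its outgoing edges if all its incoming edges are labeled
`0`, and sends `1` on all its outgoing edges otherwise; the input is ignored. -/
def orProtocol (n : ℕ) : StatelessProtocol n (Kn n) Bool where
  react i ℓ _x :=
    (fun _ => if (∀ e : {e // e ∈ Kn n}, e.1.2 = i → ℓ e = false) then false else true,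
     false)
  react_local := by
    intro i ℓ ℓ' x h
    have hiff : (∀ e : {e // e ∈ Kn n}, e.1.2 = i → ℓ e = false) ↔
        (∀ e : {e // e ∈ Kn n}, e.1.2 = i → ℓ' e = false) := by
      constructor <;> intro hh e he
      · rw [← h e he]; exact hh e he
      · rw [h e he]; exact hh e he
    simp only [hiff]

/-!
Once every node has been activated, each node sends one bit on all of its outgoing edges, so
the labeling is described by the set `S` of nodes sending `1`, and an activated node ends up in
`S` iff some other node is in `S`. If `S` ever becomes empty or everything, the labeling is
all-zeros or all-ones, both stable. If `#S ≥ 2`, `S` never shrinks and absorbs every activated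
node, so it is everything within `r` steps. If `#S = 1` forever, a node activated at step `t` is
the singleton of step `t` or of step `t + 1`, so the `r + 1` singletons of the first `r` steps
would cover all `n > r + 1` nodes.
-/

namespace StatelessProtocol

variable {n : ℕ} {E : Finset (Fin n × Fin n)} {Λ : Type}

def Broadcasting (P : StatelessProtocol n E Λ) : Prop :=
  ∀ (i : Fin n) (ℓ : {e // e ∈ E} → Λ) (x : Bool) (e e' : {e // e ∈ E}),
    e.1.1 = i → e'.1.1 = i → (P.react i ℓ x).1 e = (P.react i ℓ x).1 e'

def OutUniform (ℓ : {e // e ∈ E} → Λ) : Prop :=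
  ∀ e e' : {e // e ∈ E}, e.1.1 = e'.1.1 → ℓ e = ℓ e'

theorem Fair.comp_add {r : ℕ} {σ : ℕ → Finset (Fin n)} (hσ : Fair σ r) (k : ℕ) :
    Fair (fun t => σ (t + k)) r := by
  intro i t
  obtain ⟨s, hts, hsr, hs⟩ := hσ i (t + k)
  exact ⟨s - k, by omega, by omega, by simpa [Nat.sub_add_cancel (show k ≤ s by omega)]⟩

variable (P : StatelessProtocol n E Λ) (x : Fin n → Bool) (σ : ℕ → Finset (Fin n))
  (ℓ0 : {e // e ∈ E} → Λ)

theorem run_succ_of_mem {t : ℕ} {e : {e // e ∈ E}} (he : e.1.1 ∈ σ t) :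
    P.run x σ ℓ0 (t + 1) e = (P.react e.1.1 (P.run x σ ℓ0 t) (x e.1.1)).1 e := by
  simp only [run, if_pos he]

theorem run_succ_of_notMem {t : ℕ} {e : {e // e ∈ E}} (he : e.1.1 ∉ σ t) :
    P.run x σ ℓ0 (t + 1) e = P.run x σ ℓ0 t e := by
  simp only [run, if_neg he]

theorem run_succ_of_stable {t : ℕ} (h : P.Stable x (P.run x σ ℓ0 t)) :
    P.run x σ ℓ0 (t + 1) = P.run x σ ℓ0 t := by
  funext e
  by_cases he : e.1.1 ∈ σ t
  · rw [run_succ_of_mem P x σ ℓ0 he, h e]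
  · exact run_succ_of_notMem P x σ ℓ0 he

theorem run_eq_of_stable {T t : ℕ} (h : P.Stable x (P.run x σ ℓ0 T)) (hTt : T ≤ t) :
    P.run x σ ℓ0 t = P.run x σ ℓ0 T := by
  induction t, hTt using Nat.le_induction with
  | base => rfl
  | succ t _ ih => rw [run_succ_of_stable P x σ ℓ0 (ih ▸ h), ih]

variable {P} in
theorem Broadcasting.run_eq_of_mem_of_lt (hP : P.Broadcasting) {t : ℕ} {e e' : {e // e ∈ E}}
    (hee' : e.1.1 = e'.1.1) {s : ℕ} (hst : s < t) (hs : e.1.1 ∈ σ s) :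
    P.run x σ ℓ0 t e = P.run x σ ℓ0 t e' := by
  induction t with
  | zero => omega
  | succ t ih =>
    by_cases ht : e.1.1 ∈ σ t
    · rw [run_succ_of_mem P x σ ℓ0 ht, run_succ_of_mem P x σ ℓ0 (hee' ▸ ht), ← hee']
      exact hP _ _ _ _ _ rfl hee'.symm
    · have hst : s < t := lt_of_le_of_ne (Nat.le_of_lt_succ hst) (by rintro rfl; exact ht hs)
      rw [run_succ_of_notMem P x σ ℓ0 ht, run_succ_of_notMem P x σ ℓ0 (hee' ▸ ht), ih hst]

variable {P} in
theorem Broadcasting.outUniform_run (hP : P.Broadcasting) {r : ℕ} (hσ : Fair σ r) {t : ℕ}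
    (hrt : r ≤ t) : OutUniform (P.run x σ ℓ0 t) := by
  intro e e' hee'
  obtain ⟨s, -, hs, hsσ⟩ := hσ e.1.1 0
  exact hP.run_eq_of_mem_of_lt x σ ℓ0 hee' (by omega) hsσ

end StatelessProtocol

open StatelessProtocol

section OrUpdate

open Finset

variable {n r : ℕ} {σ : ℕ → Finset (Fin n)} {S : ℕ → Finset (Fin n)}

/-- `S` evolves like the set of nodes holding `1` when every activated node takes the
`or` of the values of all other nodes. -/
def OrUpdate (σ S : ℕ → Finset (Fin n)) : Prop :=
  ∀ t i, i ∈ S (t + 1) ↔ if i ∈ σ t then ∃ j ∈ S t, j ≠ i else i ∈ S t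

theorem OrUpdate.union_subset_succ (hS : OrUpdate σ S) {t : ℕ} (ht : 2 ≤ #(S t)) :
    S t ∪ σ t ⊆ S (t + 1) := by
  intro i _
  rw [hS]
  split_ifs with hi
  · exact exists_mem_ne ht i
  · simp_all

theorem OrUpdate.subset_of_le (hS : OrUpdate σ S) {t s : ℕ} (ht : 2 ≤ #(S t)) (hts : t ≤ s) :
    S t ⊆ S s := by
  induction s, hts using Nat.le_induction with
  | base => rfl
  | succ s _ ih =>
    exact ih.trans (subset_union_left.trans (hS.union_subset_succ (ht.trans (card_le_card ih))))

/-- Once two nodes hold `1`, no node ever drops to `0` and every activated node rises to `1`. -/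
theorem OrUpdate.eq_univ_of_two_le_card (hS : OrUpdate σ S) (hσ : Fair σ r) {t : ℕ}
    (ht : 2 ≤ #(S t)) : S (t + r) = univ := by
  refine eq_univ_of_forall fun i => ?_
  obtain ⟨s, hts, hsr, hi⟩ := hσ i t
  have hs : 2 ≤ #(S s) := ht.trans (card_le_card (hS.subset_of_le ht hts))
  have hs' : 2 ≤ #(S (s + 1)) :=
    hs.trans (card_le_card (subset_union_left.trans (hS.union_subset_succ hs)))
  exact hS.subset_of_le hs' (by omega) (hS.union_subset_succ hs (mem_union_right _ hi))

/-- If a single node holds `1` at every time `t`, call it `j t`: a node activated at time `t`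
is `j t` or `j (t + 1)`, so the `r + 1` values `j 0, …, j r` cover all `n` nodes. -/
theorem OrUpdate.not_forall_card_eq_one (hS : OrUpdate σ S) (hσ : Fair σ r) (hrn : r + 1 < n) :
    ¬ ∀ t, #(S t) = 1 := by
  intro h1
  choose j hj using fun t => card_eq_one.mp (h1 t)
  have hσj : ∀ t, ∀ i ∈ σ t, i = j t ∨ i = j (t + 1) := by
    intro t i hi
    refine or_iff_not_imp_left.mpr fun hij => ?_
    have hmem : i ∈ S (t + 1) := by
      rw [hS, if_pos hi]
      exact ⟨j t, by simp [hj], fun h => hij h.symm⟩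
    simpa [hj] using hmem
  have hcover : (univ : Finset (Fin n)) ⊆ (range (r + 1)).image j := by
    intro i _
    obtain ⟨s, -, hsr, hi⟩ := hσ i 0
    rcases hσj s i hi with h | h
    · exact mem_image.mpr ⟨s, mem_range.mpr (by omega), h.symm⟩
    · exact mem_image.mpr ⟨s + 1, mem_range.mpr (by omega), h.symm⟩
  have := (card_le_card hcover).trans card_image_le
  simp only [card_univ, Fintype.card_fin, card_range] at this
  omega

theorem OrUpdate.exists_eq_empty_or_eq_univ (hS : OrUpdate σ S) (hσ : Fair σ r)
    (hrn : r + 1 < n) : ∃ T, S T = ∅ ∨ S T = univ := by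
  by_cases h0 : ∃ t, S t = ∅
  · obtain ⟨t, ht⟩ := h0
    exact ⟨t, Or.inl ht⟩
  by_cases h2 : ∃ t, 2 ≤ #(S t)
  · obtain ⟨t, ht⟩ := h2
    exact ⟨t + r, Or.inr (hS.eq_univ_of_two_le_card hσ ht)⟩
  push Not at h0 h2
  refine absurd (fun t => ?_) (hS.not_forall_card_eq_one hσ hrn)
  have := card_pos.mpr (h0 t)
  have := h2 t
  omega

end OrUpdate

section OrProtocol

variable {n : ℕ}

theorem mem_Kn {i j : Fin n} : (i, j) ∈ Kn n ↔ i ≠ j := by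
  simp [Kn]

theorem exists_edge_fst_eq (hn : 2 ≤ n) (i : Fin n) : ∃ e : {e // e ∈ Kn n}, e.1.1 = i := by
  have := Fin.nontrivial_iff_two_le.mpr hn
  obtain ⟨j, hj⟩ := exists_ne i
  exact ⟨⟨(i, j), mem_Kn.mpr hj.symm⟩, rfl⟩

theorem exists_edge_snd_eq (hn : 2 ≤ n) (i : Fin n) : ∃ e : {e // e ∈ Kn n}, e.1.2 = i := by
  have := Fin.nontrivial_iff_two_le.mpr hn
  obtain ⟨j, hj⟩ := exists_ne i
  exact ⟨⟨(j, i), mem_Kn.mpr hj⟩, rfl⟩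

theorem orProtocol_react_eq_true_iff (i : Fin n) (ℓ : {e // e ∈ Kn n} → Bool) (b : Bool)
    (e : {e // e ∈ Kn n}) :
    ((orProtocol n).react i ℓ b).1 e = true ↔ ∃ e' : {e // e ∈ Kn n}, e'.1.2 = i ∧ ℓ e' = true := by
  simp [orProtocol]

theorem orProtocol_broadcasting : (orProtocol n).Broadcasting := by
  intro i ℓ b e e' _ _
  rfl

theorem orProtocol_stable_false (x : Fin n → Bool) : (orProtocol n).Stable x (fun _ => false) := by
  intro e
  simp [orProtocol]

theorem orProtocol_stable_true (hn : 2 ≤ n) (x : Fin n → Bool) :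
    (orProtocol n).Stable x (fun _ => true) := by
  intro e
  obtain ⟨e', he'⟩ := exists_edge_snd_eq hn e.1.1
  exact (orProtocol_react_eq_true_iff _ _ _ e).mpr ⟨e', he', rfl⟩

def senders (ℓ : {e // e ∈ Kn n} → Bool) : Finset (Fin n) :=
  Finset.univ.filter fun i => ∃ e : {e // e ∈ Kn n}, e.1.1 = i ∧ ℓ e = true

theorem mem_senders {ℓ : {e // e ∈ Kn n} → Bool} {i : Fin n} :
    i ∈ senders ℓ ↔ ∃ e : {e // e ∈ Kn n}, e.1.1 = i ∧ ℓ e = true := by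
  simp [senders]

theorem eq_false_of_senders_eq_empty {ℓ : {e // e ∈ Kn n} → Bool} (h : senders ℓ = ∅) :
    ℓ = fun _ => false := by
  funext e
  by_contra he
  exact Finset.notMem_empty e.1.1 (h ▸ mem_senders.mpr ⟨e, rfl, by simpa using he⟩)

theorem eq_true_of_senders_eq_univ {ℓ : {e // e ∈ Kn n} → Bool} (hℓ : OutUniform ℓ)
    (h : senders ℓ = Finset.univ) : ℓ = fun _ => true := by
  funext e
  obtain ⟨e', he', he'ℓ⟩ := mem_senders.mp (h ▸ Finset.mem_univ e.1.1)
  exact (hℓ e e' he'.symm).trans he'ℓ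

/-- From the time every node has been activated once, outgoing labels are uniform, so the
senders evolve by `OrUpdate`. -/
theorem orUpdate_senders_run (hn : 2 ≤ n) {r : ℕ} {σ : ℕ → Finset (Fin n)} (hσ : Fair σ r)
    (x : Fin n → Bool) (ℓ0 : {e // e ∈ Kn n} → Bool) :
    OrUpdate (fun t => σ (t + r)) (fun t => senders ((orProtocol n).run x σ ℓ0 (t + r))) := by
  intro t i
  simp only [Nat.add_right_comm t 1 r, mem_senders]
  have huni := orProtocol_broadcasting.outUniform_run x σ ℓ0 hσ (Nat.le_add_left r t)
  split_ifs with hi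
  · have hreact : ∀ e : {e // e ∈ Kn n}, e.1.1 = i →
        ((orProtocol n).run x σ ℓ0 (t + r + 1) e = true ↔
          ∃ e' : {e // e ∈ Kn n}, e'.1.2 = i ∧ (orProtocol n).run x σ ℓ0 (t + r) e' = true) := by
      rintro e rfl
      rw [run_succ_of_mem _ x σ ℓ0 hi, orProtocol_react_eq_true_iff]
    constructor
    · rintro ⟨e, hei, he⟩
      obtain ⟨e', he', he'ℓ⟩ := (hreact e hei).mp he
      exact ⟨e'.1.1, ⟨e', rfl, he'ℓ⟩, he' ▸ mem_Kn.mp e'.2⟩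
    · rintro ⟨j, ⟨e, rfl, he⟩, hji⟩
      obtain ⟨e₀, he₀⟩ := exists_edge_fst_eq hn i
      let e' : {e // e ∈ Kn n} := ⟨(e.1.1, i), mem_Kn.mpr hji⟩
      exact ⟨e₀, he₀, (hreact e₀ he₀).mpr ⟨e', rfl, (huni e' e rfl).trans he⟩⟩
  · constructor <;> rintro ⟨e, rfl, he⟩ <;> refine ⟨e, rfl, ?_⟩
    · rwa [run_succ_of_notMem _ x σ ℓ0 hi] at he
    · rwa [run_succ_of_notMem _ x σ ℓ0 hi]

end OrProtocol

/-- For `n ≥ 3`, the protocol `orProtocol n` on the complete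
directed graph `K_n` has the all-zeros and all-ones labelings as two distinct
stable labelings, yet for every `r < n - 1`, every `r`-fair schedule, every
input and every initial labeling, its labeling sequence is eventually
constant. -/
theorem orProtocol_two_stable_but_stabilizing (n : ℕ) (hn : 3 ≤ n) :
    (∀ x : Fin n → Bool,
        (orProtocol n).Stable x (fun _ => false) ∧
        (orProtocol n).Stable x (fun _ => true)) ∧
    (fun _ : {e // e ∈ Kn n} => false) ≠ (fun _ => true) ∧
    (∀ r : ℕ, r < n - 1 → ∀ σ : ℕ → Finset (Fin n),
      (∀ t, (σ t).Nonempty) → Fair σ r →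
      ∀ (x : Fin n → Bool) (ℓ0 : {e // e ∈ Kn n} → Bool),
        ∃ T, ∀ t, T ≤ t →
          (orProtocol n).run x σ ℓ0 t = (orProtocol n).run x σ ℓ0 T) := by
  have hn2 : 2 ≤ n := by omega
  refine ⟨fun x => ⟨orProtocol_stable_false x, orProtocol_stable_true hn2 x⟩, fun h => ?_,
    fun r hr σ _ hσ x ℓ0 => ?_⟩
  · obtain ⟨e, -⟩ := exists_edge_fst_eq hn2 ⟨0, by omega⟩
    exact Bool.false_ne_true (congrFun h e)
  obtain ⟨T, hT⟩ :=
    (orUpdate_senders_run hn2 hσ x ℓ0).exists_eq_empty_or_eq_univ (hσ.comp_add r) (by omega)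
  refine ⟨T + r, fun t ht => run_eq_of_stable _ x σ ℓ0 ?_ ht⟩
  rcases hT with h | h
  · rw [eq_false_of_senders_eq_empty h]
    exact orProtocol_stable_false x
  · have huni := orProtocol_broadcasting.outUniform_run x σ ℓ0 hσ (Nat.le_add_left r T)
    rw [eq_true_of_senders_eq_univ huni h]
    exact orProtocol_stable_true hn2 x
end

section
/- Let G = ([n], E) be a strongly connected directed graph and f : {0,1}^n → {0,1} any Boolean function. Then there exists a stateless protocol A_n on G with label space Σ = {0,1}^{n+1} (so label complexity L_n = n+1) that computes f, such that under the synchronous schedule, for every input and every initial labeling, within at most 2n time steps the labeling sequence reaches a fixed labeling and every node's output equals f(x₁,…,x_n) (so A_n is label-stabilizing with round complexity R_n ≤ 2n). -/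
/-- A walk of length `k` from `i` to `j` in the graph with edge set `E`. -/
def IsWalk {n : ℕ} (E : Finset (Fin n × Fin n)) (i j : Fin n) (k : ℕ) : Prop :=
  ∃ p : ℕ → Fin n, p 0 = i ∧ p k = j ∧ ∀ t < k, (p t, p (t + 1)) ∈ E

/-- The directed distance from `i` to `j`. -/
noncomputable def graphDist {n : ℕ} (E : Finset (Fin n × Fin n)) (i j : Fin n) : ℕ :=
  sInf {k | IsWalk E i j k}

/-- The radius: the minimum over nodes `i` of the maximum over nodes `j` of the
directed distance from `i` to `j`. -/
noncomputable def graphRadius {n : ℕ} (E : Finset (Fin n × Fin n)) : ℕ :=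
  sInf {r | ∃ i : Fin n, ∀ j : Fin n, graphDist E i j ≤ r}

/-- Strong connectivity: every node can reach every node by a directed walk. -/
def StronglyConn {n : ℕ} (E : Finset (Fin n × Fin n)) : Prop :=
  ∀ i j : Fin n, ∃ k, IsWalk E i j k


section AuxGraph

variable {n : ℕ} {E : Finset (Fin n × Fin n)}

lemma isWalk_shorten (hn : 0 < n) {i j : Fin n} :
    ∀ k, IsWalk E i j k → ∃ k' < n, IsWalk E i j k' := by
  intro k
  induction k using Nat.strong_induction_on with
  | _ k ih =>
    intro hw
    by_cases hk : k < n
    · exact ⟨k, hk, hw⟩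
    push_neg at hk
    obtain ⟨p, hp0, hpk, hpe⟩ := hw
    obtain ⟨a, b, hab, hpab⟩ :=
      Fintype.exists_ne_map_eq_of_card_lt (fun t : Fin (n + 1) => p (t : ℕ)) (by simp)
    have key : ∀ a b : ℕ, a < b → b ≤ n → p a = p b → ∃ k' < n, IsWalk E i j k' := by
      intro a b hab hbn hpq
      have h1 : 1 ≤ b - a := by omega
      have h2 : b - a ≤ k := by omega
      refine ih (k - (b - a)) (by omega)
        ⟨fun t => if t < a then p t else p (t + (b - a)), ?_, ?_, ?_⟩
      · beta_reduce
        by_cases h0 : 0 < a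
        · rw [if_pos h0, hp0]
        · have ha0 : a = 0 := by omega
          rw [if_neg (by omega)]
          subst ha0
          rw [Nat.zero_add, Nat.sub_zero, ← hpq, hp0]
      · beta_reduce
        rw [if_neg (by omega)]
        rw [(by omega : k - (b - a) + (b - a) = k), hpk]
      · intro t ht
        beta_reduce
        by_cases hta : t < a
        · rw [if_pos hta]
          by_cases ht1 : t + 1 < a
          · rw [if_pos ht1]
            exact hpe t (by omega)
          · have ht1' : t + 1 = a := by omega
            rw [if_neg (by omega), ht1', (by omega : a + (b - a) = b), ← hpq, ← ht1']
            exact hpe t (by omega)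
        · rw [if_neg hta, if_neg (by omega), (by omega : t + 1 + (b - a) = t + (b - a) + 1)]
          exact hpe (t + (b - a)) (by omega)
    have hab' : (a : ℕ) ≠ (b : ℕ) := fun h => hab (Fin.ext h)
    rcases hab'.lt_or_gt with h | h
    · exact key a b h (by omega) hpab
    · exact key b a h (by omega) hpab.symm

lemma isWalk_graphDist (hsc : StronglyConn E) (i j : Fin n) :
    IsWalk E i j (graphDist E i j) := by
  have hne : {k | IsWalk E i j k}.Nonempty := hsc i j
  exact Nat.sInf_mem hne

lemma graphDist_lt (hn : 0 < n) (hsc : StronglyConn E) (i j : Fin n) :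
    graphDist E i j < n := by
  obtain ⟨k, hk⟩ := hsc i j
  obtain ⟨k', hk'n, hk'⟩ := isWalk_shorten hn k hk
  exact lt_of_le_of_lt (Nat.sInf_le hk') hk'n

lemma exists_parent (hsc : StronglyConn E) {i j : Fin n} (h : j ≠ i) :
    ∃ e : {e // e ∈ E}, e.1.2 = i ∧ graphDist E j e.1.1 < graphDist E j i := by
  obtain ⟨p, hp0, hpd, hpe⟩ := isWalk_graphDist hsc j i
  have hd0 : graphDist E j i ≠ 0 := by
    intro h0
    rw [h0] at hpd
    exact h (hp0 ▸ hpd ▸ rfl)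
  obtain ⟨d', hd'⟩ : ∃ d', graphDist E j i = d' + 1 := ⟨graphDist E j i - 1, by omega⟩
  refine ⟨⟨(p d', p (d' + 1)), hpe d' (by omega)⟩, ?_, ?_⟩
  · show p (d' + 1) = i
    rw [← hd']; exact hpd
  · show graphDist E j (p d') < graphDist E j i
    have hw : IsWalk E j (p d') d' := ⟨p, hp0, rfl, fun t ht => hpe t (by omega)⟩
    calc graphDist E j (p d') ≤ d' := Nat.sInf_le hw
      _ < graphDist E j i := by omega

end AuxGraph

section Proto

variable {n : ℕ} (E : Finset (Fin n × Fin n)) (f : (Fin n → Bool) → Bool)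
  (par : ∀ i j : Fin n, j ≠ i → {e // e ∈ E})

/-- The vector of bits node `i` currently believes, reading coordinate `j ≠ i`
from the parent edge `par i j`. -/
def protoVec (i : Fin n) (ℓ : {e // e ∈ E} → (Fin (n + 1) → Bool)) (b : Bool) :
    Fin n → Bool :=
  fun j => if h : j = i then b else ℓ (par i j h) j.castSucc

/-- The flooding protocol along parent edges. -/
def proto (hpar : ∀ i j h, ((par i j h : {e // e ∈ E}) : Fin n × Fin n).2 = i) :
    StatelessProtocol n E (Fin (n + 1) → Bool) where
  react i ℓ b :=
    (fun _ c => if h : (c : ℕ) < n then protoVec E par i ℓ b ⟨c, h⟩ else false,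
     f (protoVec E par i ℓ b))
  react_local i ℓ ℓ' b h := by
    have hv : protoVec E par i ℓ b = protoVec E par i ℓ' b := by
      funext j
      unfold protoVec
      split
      · rfl
      · rw [h _ (hpar i j _)]
    beta_reduce
    rw [hv]

/-- The limiting labeling: every edge carries `x` (padded with `false`). -/
def lstar (x : Fin n → Bool) : {e // e ∈ E} → (Fin (n + 1) → Bool) :=
  fun _ c => if h : (c : ℕ) < n then x ⟨c, h⟩ else false

lemma StatelessProtocol.syncRun_succ {Λ : Type} (P : StatelessProtocol n E Λ)
    (x : Fin n → Bool) (ℓ0 : {e // e ∈ E} → Λ) (t : ℕ) (e : {e // e ∈ E}) :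
    P.syncRun x ℓ0 (t + 1) e = (P.react e.1.1 (P.syncRun x ℓ0 t) (x e.1.1)).1 e := by
  simp [StatelessProtocol.syncRun, StatelessProtocol.run]

variable (hpar : ∀ i j h, ((par i j h : {e // e ∈ E}) : Fin n × Fin n).2 = i)

lemma proto_syncRun_succ_apply (x : Fin n → Bool) (ℓ0 : {e // e ∈ E} → (Fin (n + 1) → Bool))
    (t : ℕ) (e : {e // e ∈ E}) (c : Fin (n + 1)) :
    (proto E f par hpar).syncRun x ℓ0 (t + 1) e c =
      if h : (c : ℕ) < n then
        protoVec E par e.1.1 ((proto E f par hpar).syncRun x ℓ0 t) (x e.1.1) ⟨c, h⟩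
      else false := by
  rw [StatelessProtocol.syncRun_succ]
  rfl

lemma proto_correct
    (hpar2 : ∀ i j h, graphDist E j ((par i j h : {e // e ∈ E}) : Fin n × Fin n).1
      < graphDist E j i)
    (x : Fin n → Bool) (ℓ0 : {e // e ∈ E} → (Fin (n + 1) → Bool)) :
    ∀ (t : ℕ) (j : Fin n) (e : {e // e ∈ E}), graphDist E j e.1.1 < t →
      (proto E f par hpar).syncRun x ℓ0 t e j.castSucc = x j := by
  intro t
  induction t with
  | zero => exact fun j e h => absurd h (Nat.not_lt_zero _)
  | succ t ih =>
    intro j e hd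
    rw [proto_syncRun_succ_apply]
    have hc : ((j.castSucc : Fin (n + 1)) : ℕ) < n := by
      rw [Fin.coe_castSucc]; exact j.isLt
    rw [dif_pos hc]
    have hj : (⟨((j.castSucc : Fin (n + 1)) : ℕ), hc⟩ : Fin n) = j := by
      apply Fin.ext; simp
    rw [hj]
    unfold protoVec
    split
    · next h => rw [h]
    · next h =>
      apply ih
      have := hpar2 e.1.1 j h
      omega

lemma protoVec_lstar (x : Fin n → Bool) (i : Fin n) :
    protoVec E par i (lstar E x) (x i) = x := by
  funext j
  unfold protoVec lstar
  split
  · next h => rw [h]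
  · next h =>
    have hc : ((j.castSucc : Fin (n + 1)) : ℕ) < n := by
      rw [Fin.coe_castSucc]; exact j.isLt
    rw [dif_pos hc]
    exact congrArg x (Fin.ext (by simp))

lemma proto_syncRun_eq_lstar (hn : 0 < n)
    (hpar2 : ∀ i j h, graphDist E j ((par i j h : {e // e ∈ E}) : Fin n × Fin n).1
      < graphDist E j i)
    (hlt : ∀ a b : Fin n, graphDist E a b < n)
    (x : Fin n → Bool) (ℓ0 : {e // e ∈ E} → (Fin (n + 1) → Bool)) :
    ∀ t, n ≤ t → (proto E f par hpar).syncRun x ℓ0 t = lstar E x := by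
  intro t ht
  obtain ⟨s, rfl⟩ : ∃ s, t = s + 1 := ⟨t - 1, by omega⟩
  funext e c
  rw [proto_syncRun_succ_apply]
  unfold lstar
  by_cases hc : (c : ℕ) < n
  · rw [dif_pos hc, dif_pos hc]
    set j : Fin n := ⟨(c : ℕ), hc⟩ with hjdef
    unfold protoVec
    split
    · next h => rw [h]
    · next h =>
      apply proto_correct E f par hpar hpar2
      have h1 := hpar2 e.1.1 j h
      have h2 := hlt j e.1.1
      omega
  · rw [dif_neg hc, dif_neg hc]

end Proto

open StatelessProtocol in
/-- On any strongly connected directed graph on `n` nodes, any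
Boolean function `f` can be computed by a stateless protocol with label space
`{0,1}^(n+1)` which, from every input and initial labeling, reaches within `2n`
synchronous steps a fixed labeling with every node outputting `f x`. -/
theorem exists_label_stabilizing_protocol
    {n : ℕ} (hn : 0 < n) (E : Finset (Fin n × Fin n)) (hsc : StronglyConn E)
    (f : (Fin n → Bool) → Bool) :
    ∃ P : StatelessProtocol n E (Fin (n + 1) → Bool),
      ∀ (x : Fin n → Bool) (ℓ0 : {e // e ∈ E} → (Fin (n + 1) → Bool)),
        (∀ t, 2 * n ≤ t → P.syncRun x ℓ0 t = P.syncRun x ℓ0 (2 * n)) ∧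
        P.Stable x (P.syncRun x ℓ0 (2 * n)) ∧
        (∀ t, 2 * n ≤ t → ∀ i, P.syncOut x ℓ0 t i = f x) := by
  have hp := fun (i j : Fin n) (h : j ≠ i) => exists_parent hsc h
  choose par hp1 hp2 using hp
  have hlt : ∀ a b : Fin n, graphDist E a b < n := graphDist_lt hn hsc
  refine ⟨proto E f par hp1, fun x ℓ0 => ?_⟩
  have hsync : ∀ t, n ≤ t → (proto E f par hp1).syncRun x ℓ0 t = lstar E x :=
    proto_syncRun_eq_lstar E f par hp1 hn hp2 hlt x ℓ0
  refine ⟨?_, ?_, ?_⟩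
  · intro t ht
    rw [hsync t (by omega), hsync (2 * n) (by omega)]
  · rw [hsync (2 * n) (by omega)]
    intro e
    funext c
    show (if h : (c : ℕ) < n then
        protoVec E par e.1.1 (lstar E x) (x e.1.1) ⟨c, h⟩ else false) = lstar E x e c
    unfold lstar
    by_cases hc : (c : ℕ) < n
    · rw [dif_pos hc, dif_pos hc]
      exact congrFun (protoVec_lstar E par x e.1.1) ⟨c, hc⟩
    · rw [dif_neg hc, dif_neg hc]
  · intro t ht i
    obtain ⟨s, rfl⟩ : ∃ s, t = s + 1 := ⟨t - 1, by omega⟩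
    show f (protoVec E par i ((proto E f par hp1).syncRun x ℓ0 s) (x i)) = f x
    rw [hsync s (by omega), protoVec_lstar]
end

section
/- Let A_n = (Σ, δ) be an output-stabilizing stateless protocol on the unidirectional n-ring. Then its round complexity satisfies R_n ≤ n·|Σ|. -/
/-- The unidirectional `n`-ring: edges `(i, i + 1 mod n)`. -/
def uniRing (n : ℕ) : Finset (Fin n × Fin n) :=
  Finset.image (fun i : Fin n => (i, ⟨((i : ℕ) + 1) % n, Nat.mod_lt _ i.pos⟩)) Finset.univ

/-- The bidirectional `n`-ring: edges `(i, i ± 1 mod n)`. -/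
def biRing (n : ℕ) : Finset (Fin n × Fin n) :=
  uniRing n ∪ (uniRing n).image (fun p => (p.2, p.1))

/-!
On the unidirectional ring a node reads a single incoming edge, so after one full turn of `n`
synchronous steps the label on an edge is a fixed function (the composite of the `n` reactions
around the ring) of its previous label. Along each edge the labels at times `s, s + n, s + 2n, …`
are therefore an orbit of a self-map of the finite set `Σ`, which by pigeonhole is periodic from
its `(|Σ| - 1)`-th term on. A node's output at time `t + 1` is determined by its incoming label at
time `t`, so from time `n |Σ|` on every output value recurs at arbitrarily late times; since the
outputs stabilize, it is already the final value.
-/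

theorem Function.iterate_mem_periodicPts_of_card_le_succ {α : Type*} [Fintype α] (f : α → α)
    (a : α) {k : ℕ} (hk : Fintype.card α ≤ k + 1) : f^[k] a ∈ Function.periodicPts f := by
  obtain ⟨i, j, hij, heq⟩ := Fintype.exists_ne_map_eq_of_card_lt
    (fun m : Fin (Fintype.card α + 1) => f^[m] a) (by simp)
  wlog hlt : i < j generalizing i j
  · exact this j i hij.symm heq.symm (lt_of_le_of_ne (not_lt.1 hlt) hij.symm)
  have hj := j.isLt
  have hcycle : Function.IsPeriodicPt f (j - i) (f^[i] a) := by
    change f^[j - i] (f^[i] a) = f^[i] a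
    rw [← Function.iterate_add_apply, Nat.sub_add_cancel hlt.le]
    exact heq.symm
  have hk' : f^[k] a = f^[k - i] (f^[i] a) := by
    rw [← Function.iterate_add_apply, Nat.sub_add_cancel (by omega)]
  rw [hk']
  exact Function.mk_mem_periodicPts (Nat.sub_pos_of_lt hlt) (hcycle.apply_iterate _)

open Fin.NatCast Fin.CommRing

namespace uniRing

variable {n : ℕ} [NeZero n]

def edge (i : Fin n) : {e // e ∈ uniRing n} :=
  ⟨(i, i + 1), Finset.mem_image.2 ⟨i, Finset.mem_univ i,
    Prod.ext rfl (Fin.ext (by simp [Fin.add_def, Nat.add_mod]))⟩⟩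

theorem eq_edge_fst (e : {e // e ∈ uniRing n}) : e = edge e.1.1 := by
  obtain ⟨i, -, hi⟩ := Finset.mem_image.1 e.2
  apply Subtype.ext
  rw [← hi]
  exact Prod.ext rfl (Fin.ext (by simp [edge, Fin.add_def, Nat.add_mod]))

theorem eq_edge_sub_one_of_snd_eq {e : {e // e ∈ uniRing n}} {i : Fin n} (h : e.1.2 = i) :
    e = edge (i - 1) := by
  rw [eq_edge_fst e] at h ⊢
  exact congrArg edge (eq_sub_of_add_eq h)

end uniRing

namespace StatelessProtocol

open uniRing

variable {n : ℕ} [NeZero n] {Λ : Type} (P : StatelessProtocol n (uniRing n) Λ)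
  (x : Fin n → Bool) (ℓ0 : {e // e ∈ uniRing n} → Λ)

theorem react_eq_react_const (i : Fin n) (ℓ : {e // e ∈ uniRing n} → Λ) (b : Bool) :
    P.react i ℓ b = P.react i (fun _ => ℓ (edge (i - 1))) b :=
  P.react_local i ℓ _ b fun _ he => by rw [eq_edge_sub_one_of_snd_eq he]

/-- The label node `i` writes on its outgoing edge when it reads `a` on its incoming one. -/
def ringStep (i : Fin n) (a : Λ) : Λ :=
  (P.react i (fun _ => a) (x i)).1 (edge i)

/-- `ringPath P x k i` carries a label through the `k` nodes `i - k + 1, …, i`. -/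
def ringPath : ℕ → Fin n → Λ → Λ
  | 0, _ => id
  | k + 1, i => P.ringStep x i ∘ ringPath k (i - 1)

theorem syncRun_succ_edge (t : ℕ) (i : Fin n) :
    P.syncRun x ℓ0 (t + 1) (edge i) = P.ringStep x i (P.syncRun x ℓ0 t (edge (i - 1))) := by
  simp only [syncRun, run, Finset.mem_univ, if_true]
  rw [react_eq_react_const]
  rfl

theorem syncOut_succ_eq_of_syncRun_eq {s t : ℕ} {i : Fin n}
    (h : P.syncRun x ℓ0 s (edge (i - 1)) = P.syncRun x ℓ0 t (edge (i - 1))) :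
    P.syncOut x ℓ0 (s + 1) i = P.syncOut x ℓ0 (t + 1) i := by
  change (P.react i (P.syncRun x ℓ0 s) (x i)).2 = (P.react i (P.syncRun x ℓ0 t) (x i)).2
  rw [react_eq_react_const, h, ← react_eq_react_const]

theorem syncRun_add_edge (t k : ℕ) (i : Fin n) :
    P.syncRun x ℓ0 (t + k) (edge i) = P.ringPath x k i (P.syncRun x ℓ0 t (edge (i - k))) := by
  induction k generalizing i with
  | zero => simp [ringPath]
  | succ k ih =>
    rw [← add_assoc, syncRun_succ_edge, ih, show i - ((k + 1 : ℕ) : Fin n) = i - 1 - k by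
      push_cast; ring]
    rfl

theorem syncRun_add_mul_edge (t m : ℕ) (i : Fin n) :
    P.syncRun x ℓ0 (t + m * n) (edge i) =
      (P.ringPath x n i)^[m] (P.syncRun x ℓ0 t (edge i)) := by
  induction m with
  | zero => simp
  | succ m ih =>
    rw [add_mul, one_mul, ← add_assoc, syncRun_add_edge, Fin.natCast_self, sub_zero, ih,
      Function.iterate_succ_apply']

theorem exists_period_syncRun_edge [Fintype Λ] {s : ℕ} (hs : n * (Fintype.card Λ - 1) ≤ s)
    (i : Fin n) :
    ∃ p > 0, ∀ c, P.syncRun x ℓ0 (s + c * p) (edge i) = P.syncRun x ℓ0 s (edge i) := by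
  have hn : 0 < n := Nat.pos_of_neZero n
  obtain ⟨r, k, rfl, hk⟩ : ∃ r k, s = r + k * n ∧ Fintype.card Λ ≤ k + 1 := by
    refine ⟨s % n, s / n, (Nat.mod_add_div' s n).symm, ?_⟩
    have : Fintype.card Λ - 1 ≤ s / n := (Nat.le_div_iff_mul_le hn).2 (by rwa [mul_comm])
    omega
  obtain ⟨q, hq, hper⟩ := Function.mem_periodicPts.1
    (Function.iterate_mem_periodicPts_of_card_le_succ (P.ringPath x n i) _ hk)
  refine ⟨q * n, Nat.mul_pos hq hn, fun c => ?_⟩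
  rw [show r + k * n + c * (q * n) = r + (c * q + k) * n by ring, syncRun_add_mul_edge,
    syncRun_add_mul_edge, Function.iterate_add_apply]
  exact (hper.const_mul c).eq

theorem syncOut_eq_of_mul_card_le [Fintype Λ] {T : ℕ}
    (hT : ∀ t, T ≤ t → P.syncOut x ℓ0 t = P.syncOut x ℓ0 T) {t : ℕ}
    (ht : n * Fintype.card Λ ≤ t) : P.syncOut x ℓ0 t = P.syncOut x ℓ0 T := by
  have hn : 0 < n := Nat.pos_of_neZero n
  have hcard : 0 < Fintype.card Λ := Fintype.card_pos_iff.2 ⟨ℓ0 (edge 0)⟩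
  obtain ⟨s, rfl⟩ : ∃ s, t = s + 1 :=
    Nat.exists_eq_add_one.2 ((Nat.mul_pos hn hcard).trans_le ht)
  have hs : n * (Fintype.card Λ - 1) ≤ s := by
    rw [Nat.mul_sub_one]
    omega
  funext i
  obtain ⟨p, hp, hper⟩ := P.exists_period_syncRun_edge x ℓ0 hs (i - 1)
  calc P.syncOut x ℓ0 (s + 1) i = P.syncOut x ℓ0 (s + T * p + 1) i :=
        P.syncOut_succ_eq_of_syncRun_eq x ℓ0 (hper T).symm
    _ = P.syncOut x ℓ0 T i := congrFun (hT _ (by nlinarith)) i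

end StatelessProtocol

open StatelessProtocol in
theorem uniRing_round_complexity_le_general
    {n : ℕ} {Λ : Type} [Fintype Λ]
    (P : StatelessProtocol n (uniRing n) Λ) (hP : P.OutputStabilizing) :
    ∀ x ℓ0, ∀ t, n * Fintype.card Λ ≤ t →
      P.syncOut x ℓ0 t = P.syncOut x ℓ0 (n * Fintype.card Λ) := by
  intro x ℓ0 t ht
  rcases Nat.eq_zero_or_pos n with rfl | hn
  · exact funext fun i => i.elim0
  have : NeZero n := ⟨hn.ne'⟩
  obtain ⟨T, hT⟩ := hP x ℓ0
  rw [P.syncOut_eq_of_mul_card_le x ℓ0 hT ht, P.syncOut_eq_of_mul_card_le x ℓ0 hT le_rfl]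

open StatelessProtocol in
/-- An output-stabilizing stateless protocol on the
unidirectional `n`-ring has round complexity at most `n * |Σ|`. -/
theorem uniRing_round_complexity_le
    {n : ℕ} {Λ : Type} [Fintype Λ] [Nonempty Λ]
    (P : StatelessProtocol n (uniRing n) Λ) (hP : P.OutputStabilizing) :
    ∀ x ℓ0, ∀ t, n * Fintype.card Λ ≤ t →
      P.syncOut x ℓ0 t = P.syncOut x ℓ0 (n * Fintype.card Λ) :=
  uniRing_round_complexity_le_general P hP
end

section
/- For every n ≥ 2 and every q ≥ 2 there exists an output-stabilizing stateless protocol on the unidirectional n-ring with label space Σ = {0,1,…,q−1} whose round complexity is exactly n·(q−1): there is an input and initial labeling for which some node's output changes at time step n·(q−1), and under every input and initial labeling all outputs are constant from time step n·(q−1) onward. -/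
/-!
Labels are counters circulating on the ring: node `0` forwards the counter it receives decremented
(saturating at `0`), every other node forwards it unchanged, and each node outputs whether the
counter it sends is nonzero. A counter loses one unit per lap of `n` steps, so every counter starting
at most at `q - 1` is `0` from time `n (q - 1)` on; the counter starting at `q - 1` at node `0` is
still `1` at time `n (q - 1) - 1`.
-/

namespace uniRing

variable {n : ℕ}

def outEdge (i : Fin n) : {e // e ∈ uniRing n} :=
  ⟨_, Finset.mem_image_of_mem _ (Finset.mem_univ i)⟩

theorem outEdge_snd [NeZero n] (i : Fin n) : (outEdge i).1.2 = i + 1 := by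
  ext
  simp [outEdge, Fin.val_add]

end uniRing

namespace StatelessProtocol

variable {n : ℕ} [NeZero n] {Λ : Type}

open Fin.CommRing uniRing

def ringRelay (f : Fin n → Λ → Λ) (o : Λ → Bool) : StatelessProtocol n (uniRing n) Λ where
  react i ℓ _ := (fun _ => f i (ℓ (outEdge (i - 1))), o (f i (ℓ (outEdge (i - 1)))))
  react_local i ℓ ℓ' _ h := by rw [h _ (by simp [outEdge_snd])]

section ringRelay

variable (f : Fin n → Λ → Λ) (o : Λ → Bool) (x : Fin n → Bool) (ℓ0 : {e // e ∈ uniRing n} → Λ)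

theorem syncRun_ringRelay_succ (t : ℕ) (i : Fin n) :
    (ringRelay f o).syncRun x ℓ0 (t + 1) (outEdge i) =
      f i ((ringRelay f o).syncRun x ℓ0 t (outEdge (i - 1))) := by
  simp [syncRun, run, ringRelay, outEdge]

theorem syncOut_ringRelay {t : ℕ} (ht : t ≠ 0) (i : Fin n) :
    (ringRelay f o).syncOut x ℓ0 t i = o ((ringRelay f o).syncRun x ℓ0 t (outEdge i)) := by
  obtain ⟨s, rfl⟩ := Nat.exists_eq_succ_of_ne_zero ht
  rw [syncRun_ringRelay_succ]
  rfl

end ringRelay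

variable (n) in
def ringCountdown (q : ℕ) : StatelessProtocol n (uniRing n) (Fin q) :=
  ringRelay (fun i v => if i = 0 then ⟨v - 1, (Nat.sub_le _ _).trans_lt v.isLt⟩ else v)
    (fun v => v.val ≠ 0)

variable {q : ℕ} (x : Fin n → Bool) (ℓ0 : {e // e ∈ uniRing n} → Fin q)

theorem val_syncRun_ringCountdown_succ (t : ℕ) (i : Fin n) :
    ((ringCountdown n q).syncRun x ℓ0 (t + 1) (outEdge i)).val =
      ((ringCountdown n q).syncRun x ℓ0 t (outEdge (i - 1))).val - if i = 0 then 1 else 0 := by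
  rw [ringCountdown, syncRun_ringRelay_succ]
  split_ifs <;> rfl

/-- Only node `0` decrements, so the label sent by node `m + t` at time `t` is the initial label
of node `m`, decreased once for each multiple of `n` in `(m, m + t]`. -/
theorem val_syncRun_ringCountdown (m t : ℕ) :
    ((ringCountdown n q).syncRun x ℓ0 t (outEdge ((m + t : ℕ) : Fin n))).val =
      (ℓ0 (outEdge (m : Fin n))).val - ((m + t) / n - m / n) := by
  induction t with
  | zero => simp [syncRun, run]
  | succ t ih =>
    have hpred : ((m + (t + 1) : ℕ) : Fin n) - 1 = ((m + t : ℕ) : Fin n) := by push_cast; ring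
    have hmono : m / n ≤ (m + t) / n := Nat.div_le_div_right (Nat.le_add_right m t)
    rw [val_syncRun_ringCountdown_succ, hpred, ih, ← add_assoc, Nat.succ_div]
    simp only [Fin.natCast_eq_zero]
    split_ifs <;> omega

theorem syncOut_ringCountdown {t : ℕ} (ht : t ≠ 0) (i : Fin n) :
    (ringCountdown n q).syncOut x ℓ0 t i =
      decide (((ringCountdown n q).syncRun x ℓ0 t (outEdge i)).val ≠ 0) :=
  syncOut_ringRelay _ _ x ℓ0 ht i

/-- Node `i` is node `m + t` for `m = i + (n - 1) t`, and the interval `(m, m + t]` contains at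
least `t / n ≥ q - 1` multiples of `n`. -/
theorem syncRun_ringCountdown_eq_zero {t : ℕ} (ht : n * (q - 1) ≤ t) (i : Fin n) :
    ((ringCountdown n q).syncRun x ℓ0 t (outEdge i)).val = 0 := by
  have hm : i.val + (n - 1) * t + t = i.val + n * t := by
    rw [add_assoc, ← Nat.succ_mul, Nat.succ_eq_add_one, Nat.sub_add_cancel NeZero.one_le]
  have hclosed := val_syncRun_ringCountdown x ℓ0 (i.val + (n - 1) * t) t
  rw [hm, Nat.cast_add, Nat.cast_mul, Fin.natCast_self, zero_mul, add_zero, Fin.cast_val_eq_self]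
    at hclosed
  have hpasses : q - 1 ≤ (i.val + n * t) / n - (i.val + (n - 1) * t) / n :=
    calc q - 1 ≤ t / n := (Nat.le_div_iff_mul_le (NeZero.pos n)).2 (by rwa [mul_comm])
      _ ≤ _ := by
        have := @Nat.div_add_div_le_add_div (i.val + (n - 1) * t) t n
        rw [← hm]
        omega
  have := (ℓ0 (outEdge ((i.val + (n - 1) * t : ℕ) : Fin n))).isLt
  omega

theorem syncOut_ringCountdown_eq_false {t : ℕ} (ht : n * (q - 1) ≤ t) (ht0 : t ≠ 0) (i : Fin n) :
    (ringCountdown n q).syncOut x ℓ0 t i = false := by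
  simp [syncOut_ringCountdown x ℓ0 ht0, syncRun_ringCountdown_eq_zero x ℓ0 ht]

/-- The label `q - 1` sent by node `0` at time `0` reaches node `n (q - 1) - 1` (mod `n`) at time
`n (q - 1) - 1`, passing node `0` only `q - 2` more times. -/
theorem exists_syncOut_ringCountdown_eq_true (hn : 2 ≤ n) (hq : 2 ≤ q)
    (h0 : (ℓ0 (outEdge 0)).val = q - 1) :
    ∃ i, (ringCountdown n q).syncOut x ℓ0 (n * (q - 1) - 1) i = true := by
  obtain ⟨k, rfl⟩ : ∃ k, q = k + 2 := ⟨q - 2, by omega⟩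
  have hT : n * (k + 2 - 1) - 1 = k * n + (n - 1) := by
    rw [show k + 2 - 1 = k + 1 by omega, mul_add_one, mul_comm]
    omega
  have hpasses : (k * n + (n - 1)) / n = k :=
    Nat.div_eq_of_lt_le (by omega) (by rw [add_one_mul]; omega)
  rw [hT]
  refine ⟨((k * n + (n - 1) : ℕ) : Fin n), ?_⟩
  rw [syncOut_ringCountdown x ℓ0 (by omega)]
  have hclosed := val_syncRun_ringCountdown x ℓ0 0 (k * n + (n - 1))
  rw [zero_add, Nat.cast_zero, h0, hpasses, Nat.zero_div] at hclosed
  simp only [hclosed, decide_eq_true_eq]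
  omega

end StatelessProtocol

open StatelessProtocol in
/-- For every `n ≥ 2` and `q ≥ 2` there is an
output-stabilizing stateless protocol on the unidirectional `n`-ring with label
space of size `q` whose round complexity is exactly `n * (q - 1)`: under every
input and initial labeling all outputs are constant from time step `n * (q-1)`
onward, and for some input, initial labeling and node, the output at time step
`n * (q - 1)` differs from the output one step earlier. -/
theorem exists_uniRing_protocol_round_exact (n q : ℕ) (hn : 2 ≤ n) (hq : 2 ≤ q) :
    ∃ P : StatelessProtocol n (uniRing n) (Fin q),
      (∀ x ℓ0, ∀ t, n * (q - 1) ≤ t →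
        P.syncOut x ℓ0 t = P.syncOut x ℓ0 (n * (q - 1))) ∧
      (∃ x ℓ0 i, P.syncOut x ℓ0 (n * (q - 1)) i ≠
        P.syncOut x ℓ0 (n * (q - 1) - 1) i) := by
  have : NeZero n := ⟨by omega⟩
  have hT : n * (q - 1) ≠ 0 := Nat.mul_ne_zero (by omega) (by omega)
  refine ⟨ringCountdown n q, fun x ℓ0 t ht => ?_, ?_⟩
  · funext i
    rw [syncOut_ringCountdown_eq_false x ℓ0 ht (by omega),
      syncOut_ringCountdown_eq_false x ℓ0 le_rfl hT]
  · let ℓ0 : {e // e ∈ uniRing n} → Fin q := fun _ => ⟨q - 1, by omega⟩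
    obtain ⟨i, hi⟩ := exists_syncOut_ringCountdown_eq_true (fun _ => false) ℓ0 hn hq rfl
    refine ⟨fun _ => false, ℓ0, i, ?_⟩
    rw [hi, syncOut_ringCountdown_eq_false _ _ le_rfl hT]
    decide
end

section
/- For every odd n ≥ 3 and every integer D ≥ 1 there exists a stateless protocol on the bidirectional n-ring, with label complexity L_n = 2 + 3·⌈log₂ D⌉ (reaction functions ignore inputs and outputs), that implements a D-counter: under the synchronous schedule, for every initial labeling, after at most 4n time steps every node can read from its incoming labels an identical value c_t ∈ {0,1,…,D−1}, the same for all nodes at each time step t, and c_{t+1} ≡ c_t + 1 (mod D) for all such t. -/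
/-!
Values in `ZMod (2 * D)` leave node `0` along two paths, clockwise `0 → 1 → ⋯ → n - 1` and
`0 → 1 → 0 → n - 1 → ⋯ → 1`, gaining one per hop. Since the loop `0 → 1 → 0` has length
two, node `0`'s output at time `t` is `t` plus an offset that depends only on the parity of
`t`: two interleaved clocks. A node at distance `d` along one path is at distance `n - d`
along the other, so for odd `n` it sees both clocks, in some order. Reading the clock that
leads by less than `D`, reduced modulo `D`, is symmetric and commutes with the tick, so all
nodes read the same `D`-counter. Only `2 * D` of the labels are used.
-/

namespace StatelessProtocol

variable {n : ℕ} {E : Finset (Fin n × Fin n)} {Λ Λ' : Type}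

theorem syncRun_succ_s8 (P : StatelessProtocol n E Λ) (x : Fin n → Bool)
    (ℓ0 : {e // e ∈ E} → Λ) (t : ℕ) (e : {e // e ∈ E}) :
    P.syncRun x ℓ0 (t + 1) e = (P.react e.1.1 (P.syncRun x ℓ0 t) (x e.1.1)).1 e := by
  simp [syncRun, run]

def recode (P : StatelessProtocol n E Λ) (enc : Λ → Λ') (dec : Λ' → Λ) :
    StatelessProtocol n E Λ' where
  react i ℓ x := (enc ∘ (P.react i (dec ∘ ℓ) x).1, (P.react i (dec ∘ ℓ) x).2)
  react_local i ℓ ℓ' x h := by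
    rw [P.react_local i (dec ∘ ℓ) (dec ∘ ℓ') x fun e he => congrArg dec (h e he)]

theorem comp_run_recode (P : StatelessProtocol n E Λ) {enc : Λ → Λ'} {dec : Λ' → Λ}
    (h : Function.LeftInverse dec enc) (x : Fin n → Bool) (σ : ℕ → Finset (Fin n))
    (ℓ0 : {e // e ∈ E} → Λ') (t : ℕ) :
    dec ∘ (P.recode enc dec).run x σ ℓ0 t = P.run x σ (dec ∘ ℓ0) t := by
  induction t with
  | zero => rfl
  | succ t ih =>
    funext e
    simp only [Function.comp_apply, run]
    split_ifs
    · show dec (enc _) = _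
      rw [h, ih]
    · exact congrFun ih e

end StatelessProtocol

open StatelessProtocol

section BiRing

open Fin.CommRing

variable {n : ℕ} [NeZero n] {Λ : Type}

theorem mk_add_one_mem_uniRing (i : Fin n) : (i, i + 1) ∈ uniRing n :=
  Finset.mem_image.mpr ⟨i, Finset.mem_univ i, by
    ext <;> simp [Fin.val_add, Nat.add_mod]⟩

def cwEdge (i : Fin n) : {e // e ∈ biRing n} :=
  ⟨(i, i + 1), Finset.mem_union_left _ (mk_add_one_mem_uniRing i)⟩

def ccwEdge (i : Fin n) : {e // e ∈ biRing n} :=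
  ⟨(i + 1, i), Finset.mem_union_right _
    (Finset.mem_image.mpr ⟨_, mk_add_one_mem_uniRing i, rfl⟩)⟩

theorem Fin.natCast_ne_zero_of_lt {k : ℕ} (h0 : 0 < k) (hk : k < n) : (k : Fin n) ≠ 0 :=
  fun h => absurd (Nat.le_of_dvd h0 (Fin.natCast_eq_zero.mp h)) (by omega)

theorem ne_add_one_add_one (hn : 3 ≤ n) (i : Fin n) : i ≠ i + 1 + 1 := by
  intro h
  have h2 : i + ((2 : ℕ) : Fin n) = i := by
    rw [Nat.cast_two, ← one_add_one_eq_two, ← add_assoc]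
    exact h.symm
  exact Fin.natCast_ne_zero_of_lt two_pos (by omega) (add_eq_left.mp h2)

theorem incoming_eq {ℓ ℓ' : {e // e ∈ biRing n} → Λ} {i : Fin n}
    (h : ∀ e : {e // e ∈ biRing n}, e.1.2 = i → ℓ e = ℓ' e) :
    ℓ (cwEdge (i - 1)) = ℓ' (cwEdge (i - 1)) ∧ ℓ (ccwEdge i) = ℓ' (ccwEdge i) :=
  ⟨h _ (sub_add_cancel i 1), h _ rfl⟩

def ringProtocol (fwd bwd : Fin n → Λ → Λ → Λ) : StatelessProtocol n (biRing n) Λ where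
  react i ℓ _ :=
    (fun e => if e.1.2 = i + 1 then fwd i (ℓ (cwEdge (i - 1))) (ℓ (ccwEdge i))
      else bwd i (ℓ (cwEdge (i - 1))) (ℓ (ccwEdge i)), false)
  react_local i ℓ ℓ' _ h := by
    obtain ⟨h₁, h₂⟩ := incoming_eq h
    simp only [h₁, h₂]

variable (fwd bwd : Fin n → Λ → Λ → Λ) (x : Fin n → Bool) (ℓ0 : {e // e ∈ biRing n} → Λ)

theorem ringProtocol_syncRun_cwEdge (t : ℕ) (i : Fin n) :
    (ringProtocol fwd bwd).syncRun x ℓ0 (t + 1) (cwEdge i) =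
      fwd i ((ringProtocol fwd bwd).syncRun x ℓ0 t (cwEdge (i - 1)))
        ((ringProtocol fwd bwd).syncRun x ℓ0 t (ccwEdge i)) := by
  rw [syncRun_succ_s8]
  exact if_pos rfl

theorem ringProtocol_syncRun_ccwEdge (hn : 3 ≤ n) (t : ℕ) (i : Fin n) :
    (ringProtocol fwd bwd).syncRun x ℓ0 (t + 1) (ccwEdge i) =
      bwd (i + 1) ((ringProtocol fwd bwd).syncRun x ℓ0 t (cwEdge i))
        ((ringProtocol fwd bwd).syncRun x ℓ0 t (ccwEdge (i + 1))) := by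
  rw [syncRun_succ_s8]
  refine (if_neg (ne_add_one_add_one hn i)).trans ?_
  simp only [cwEdge, ccwEdge, add_sub_cancel_right]

end BiRing

theorem chain_value_eq {R : Type*} [AddCommGroupWithOne R] {F : ℕ → ℕ → R} {K : ℕ}
    (hF : ∀ k < K, ∀ t, F (k + 1) (t + 1) = F k t + 1) {k t : ℕ} (hk : k ≤ K) (ht : k ≤ t) :
    F k t = F 0 (t - k) - ((t - k : ℕ) : R) + t := by
  induction k generalizing t with
  | zero => simp
  | succ k ih =>
    obtain ⟨s, rfl⟩ : ∃ s, t = s + 1 := ⟨t - 1, by omega⟩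
    rw [hF k (by omega) s, ih (by omega) (by omega), Nat.add_sub_add_right, Nat.cast_succ,
      add_assoc]

section Relay

open Fin.CommRing

variable {n : ℕ} [NeZero n]

/-- Node `0` turns the counterclockwise stream around into the clockwise one, node `1` the
clockwise stream into the counterclockwise one; every hop adds one. -/
def relayProtocol (n : ℕ) [NeZero n] (R : Type) [AddCommGroupWithOne R] :
    StatelessProtocol n (biRing n) R :=
  ringProtocol (fun i u v => if i = 0 then v + 1 else u + 1)
    (fun i u v => if i = 1 then u + 1 else v + 1)

/-- The path `0 → 1 → 0 → n - 1 → n - 2 → ⋯ → 1` along which node `0`'s clockwise output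
travels counterclockwise. -/
def ccwPath : ℕ → {e // e ∈ biRing n}
  | 0 => cwEdge 0
  | k + 1 => ccwEdge (-(k : Fin n))

theorem ccwPath_sub_val (j : Fin n) : ccwPath (n - j.val) = ccwEdge (j + 1) := by
  obtain ⟨m, hm⟩ : ∃ m, n - j.val = m + 1 := ⟨n - 1 - j.val, by omega⟩
  have hsum : ((m + (j.val + 1) : ℕ) : Fin n) = 0 := by
    rw [show m + (j.val + 1) = n by omega, Fin.natCast_self]
  push_cast [Fin.cast_val_eq_self] at hsum
  rw [hm, ccwPath, ← eq_neg_of_add_eq_zero_right hsum]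

variable {R : Type} [AddCommGroupWithOne R] (x : Fin n → Bool)
  (ℓ0 : {e // e ∈ biRing n} → R)

theorem relay_cwEdge_succ {j : ℕ} (hj : j + 1 < n) (t : ℕ) :
    (relayProtocol n R).syncRun x ℓ0 (t + 1) (cwEdge ((j + 1 : ℕ) : Fin n)) =
      (relayProtocol n R).syncRun x ℓ0 t (cwEdge j) + 1 := by
  rw [relayProtocol, ringProtocol_syncRun_cwEdge,
    if_neg (Fin.natCast_ne_zero_of_lt j.succ_pos hj), Nat.cast_succ, add_sub_cancel_right]

theorem relay_ccwPath_succ (hn : 3 ≤ n) {k : ℕ} (hk : k < n) (t : ℕ) :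
    (relayProtocol n R).syncRun x ℓ0 (t + 1) (ccwPath (k + 1)) =
      (relayProtocol n R).syncRun x ℓ0 t (ccwPath k) + 1 := by
  rw [relayProtocol, ccwPath, ringProtocol_syncRun_ccwEdge _ _ _ _ hn]
  cases k with
  | zero => simp [ccwPath]
  | succ m =>
    have hturn : -((m + 1 : ℕ) : Fin n) + 1 = -(m : Fin n) := by push_cast; abel
    have hne : -(m : Fin n) ≠ 1 := by
      rw [Ne, neg_eq_iff_eq_neg, ← sub_eq_zero, sub_neg_eq_add, ← Nat.cast_succ]
      exact Fin.natCast_ne_zero_of_lt m.succ_pos hk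
    rw [hturn, if_neg hne, ccwPath]

theorem relay_cwEdge_zero_succ (t : ℕ) :
    (relayProtocol n R).syncRun x ℓ0 (t + 1) (cwEdge 0) =
      (relayProtocol n R).syncRun x ℓ0 t (ccwPath 1) + 1 := by
  rw [relayProtocol, ringProtocol_syncRun_cwEdge]
  simp [ccwPath]

def relayOffset (t : ℕ) : R := (relayProtocol n R).syncRun x ℓ0 t (cwEdge 0) - t

theorem relayOffset_periodic (hn : 3 ≤ n) : Function.Periodic (relayOffset x ℓ0) 2 := by
  intro t
  rw [relayOffset, relayOffset, relay_cwEdge_zero_succ, relay_ccwPath_succ x ℓ0 hn (by omega)]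
  simp only [ccwPath, Nat.cast_add, Nat.cast_ofNat]
  rw [← one_add_one_eq_two]
  abel

theorem relay_cwEdge_eq {d t : ℕ} (hd : d < n) (ht : d ≤ t) :
    (relayProtocol n R).syncRun x ℓ0 t (cwEdge d) = relayOffset x ℓ0 (t - d) + t := by
  have := chain_value_eq (F := fun k t => (relayProtocol n R).syncRun x ℓ0 t (cwEdge k))
    (K := n - 1) (fun k hk t => relay_cwEdge_succ x ℓ0 (by omega) t) (by omega) ht
  simpa only [Nat.cast_zero, relayOffset] using this

theorem relay_ccwPath_eq (hn : 3 ≤ n) {d t : ℕ} (hd : d ≤ n) (ht : d ≤ t) :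
    (relayProtocol n R).syncRun x ℓ0 t (ccwPath d) = relayOffset x ℓ0 (t - d) + t :=
  chain_value_eq (F := fun k t => (relayProtocol n R).syncRun x ℓ0 t (ccwPath k))
    (fun _ hk t => relay_ccwPath_succ x ℓ0 hn hk t) hd ht

/-- The incoming edges of a node lie at distances `d` and `n - d` from node `0` along the
two paths, and these have different parities as `n` is odd. -/
theorem relay_incoming_eq (hn : 3 ≤ n) (hodd : Odd n) (i : Fin n) {t : ℕ} (ht : n ≤ t) :
    s((relayProtocol n R).syncRun x ℓ0 t (cwEdge (i - 1)),
        (relayProtocol n R).syncRun x ℓ0 t (ccwEdge i)) =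
      s(relayOffset x ℓ0 0 + t, relayOffset x ℓ0 1 + t) := by
  set d := (i - 1).val
  have hd : d < n := (i - 1).isLt
  have hcw : cwEdge (i - 1) = cwEdge (d : Fin n) := by rw [Fin.cast_val_eq_self]
  have hccw : ccwEdge i = ccwPath (n - d) := by rw [ccwPath_sub_val, sub_add_cancel]
  rw [hcw, hccw, relay_cwEdge_eq x ℓ0 hd (by omega), relay_ccwPath_eq x ℓ0 hn (by omega) (by omega),
    ← (relayOffset_periodic x ℓ0 hn).map_mod_nat (t - d),
    ← (relayOffset_periodic x ℓ0 hn).map_mod_nat (t - (n - d))]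
  obtain ⟨w, rfl⟩ := hodd
  rcases Nat.mod_two_eq_zero_or_one (t - d) with h | h
  · rw [h, show (t - (2 * w + 1 - d)) % 2 = 1 by omega]
  · rw [h, show (t - (2 * w + 1 - d)) % 2 = 0 by omega, Sym2.eq_swap]

end Relay

section Blend

variable {D : ℕ}

/-- Of two values of `ZMod (2 * D)`, the one that is ahead of the other by less than `D`;
on a tie the two agree modulo `D`. -/
def leading (u v : ZMod (2 * D)) : ZMod (2 * D) := if (u - v).val < D then u else v

theorem leading_add_right (u v w : ZMod (2 * D)) : leading (u + w) (v + w) = leading u v + w := by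
  unfold leading
  rw [add_sub_add_right_eq_sub]
  split_ifs <;> rfl

variable [NeZero D]

theorem castHom_leading_comm (u v : ZMod (2 * D)) :
    ZMod.castHom (dvd_mul_left D 2) (ZMod D) (leading u v) =
      ZMod.castHom (dvd_mul_left D 2) (ZMod D) (leading v u) := by
  rcases eq_or_ne u v with rfl | hne
  · rfl
  have hlt := (u - v).val_lt
  have hval : (v - u).val = 2 * D - (u - v).val := by
    rw [← neg_sub, ZMod.neg_val, if_neg (sub_ne_zero.mpr hne)]
  have hpos : (u - v).val ≠ 0 := by rwa [Ne, ZMod.val_eq_zero, sub_eq_zero]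
  unfold leading
  rw [hval]
  rcases lt_trichotomy (u - v).val D with h | h | h
  · rw [if_pos h, if_neg (by omega)]
  · have htie : ZMod.castHom (dvd_mul_left D 2) (ZMod D) (u - v) = 0 := by
      rw [ZMod.castHom_apply, ZMod.cast_eq_val, h, ZMod.natCast_self]
    rw [if_neg h.not_lt, if_neg (by omega), ← sub_add_cancel u v, map_add, htie, zero_add]
  · rw [if_neg (by omega), if_pos (by omega)]

def blend : Sym2 (ZMod (2 * D)) → ZMod D :=
  Sym2.lift ⟨fun u v => ZMod.castHom (dvd_mul_left D 2) (ZMod D) (leading u v),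
    castHom_leading_comm⟩

theorem blend_mk_add_natCast (u v : ZMod (2 * D)) (t : ℕ) :
    blend s(u + (t : ZMod (2 * D)), v + t) = blend s(u, v) + (t : ZMod D) := by
  simp only [blend, Sym2.lift_mk, leading_add_right, map_add, map_natCast]

end Blend

section Counter

variable {n D : ℕ} [NeZero n] [NeZero D]

def counterRead (i : Fin n) (ℓ : {e // e ∈ biRing n} → ZMod (2 * D)) : ZMod D :=
  blend s(ℓ (cwEdge (i - 1)), ℓ (ccwEdge i))

theorem counterRead_syncRun (hn : 3 ≤ n) (hodd : Odd n) (x : Fin n → Bool)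
    (ℓ0 : {e // e ∈ biRing n} → ZMod (2 * D)) (i : Fin n) {t : ℕ} (ht : n ≤ t) :
    counterRead i ((relayProtocol n (ZMod (2 * D))).syncRun x ℓ0 t) =
      blend s(relayOffset x ℓ0 0, relayOffset x ℓ0 1) + t := by
  rw [counterRead, relay_incoming_eq x ℓ0 hn hodd i ht, blend_mk_add_natCast]

end Counter

theorem two_mul_le_two_pow_clog (D : ℕ) : 2 * D ≤ 2 ^ (2 + 3 * Nat.clog 2 D) :=
  calc 2 * D ≤ 2 ^ 2 * 2 ^ Nat.clog 2 D := by
        have := Nat.le_pow_clog one_lt_two D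
        omega
    _ ≤ 2 ^ 2 * 2 ^ (3 * Nat.clog 2 D) :=
        Nat.mul_le_mul_left _ (Nat.pow_le_pow_right two_pos (by omega))
    _ = 2 ^ (2 + 3 * Nat.clog 2 D) := (pow_add _ _ _).symm

def ZMod.toFinOfLE {m N : ℕ} [NeZero m] (h : m ≤ N) (z : ZMod m) : Fin N :=
  ⟨z.val, z.val_lt.trans_le h⟩

theorem ZMod.leftInverse_toFinOfLE {m N : ℕ} [NeZero m] (h : m ≤ N) :
    Function.LeftInverse (fun l : Fin N => ((l : ℕ) : ZMod m)) (ZMod.toFinOfLE h) :=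
  ZMod.natCast_zmod_val

open StatelessProtocol in
/-- For every odd `n ≥ 3` and `D ≥ 1` there is a stateless
protocol on the bidirectional `n`-ring with label complexity
`2 + 3⌈log₂ D⌉` (reaction functions ignore inputs and outputs) implementing a
`D`-counter: there are readout functions, each depending only on the incoming
labels of its node, such that under the synchronous schedule, from every
initial labeling, from time step `4n` on all nodes read an identical value
`c_t ∈ {0, …, D-1}` with `c_{t+1} = c_t + 1 (mod D)`. -/
theorem exists_D_counter (n D : ℕ) (hn : 3 ≤ n) (hodd : Odd n) (hD : 1 ≤ D) :
    ∃ (P : StatelessProtocol n (biRing n) (Fin (2 ^ (2 + 3 * Nat.clog 2 D))))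
      (read : Fin n →
        ({e // e ∈ biRing n} → Fin (2 ^ (2 + 3 * Nat.clog 2 D))) → Fin D),
      (∀ i ℓ x x', P.react i ℓ x = P.react i ℓ x') ∧
      (∀ i ℓ ℓ', (∀ e : {e // e ∈ biRing n}, e.1.2 = i → ℓ e = ℓ' e) →
        read i ℓ = read i ℓ') ∧
      ∀ (x : Fin n → Bool)
        (ℓ0 : {e // e ∈ biRing n} → Fin (2 ^ (2 + 3 * Nat.clog 2 D))),
        ∃ c : ℕ → Fin D,
          (∀ t, 4 * n ≤ t → ∀ i, read i (P.syncRun x ℓ0 t) = c t) ∧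
          (∀ t, 4 * n ≤ t → ((c (t + 1) : ℕ)) = ((c t : ℕ) + 1) % D) := by
  have : NeZero n := ⟨by omega⟩
  have : NeZero D := ⟨by omega⟩
  have hdec := ZMod.leftInverse_toFinOfLE (two_mul_le_two_pow_clog D)
  set dec := fun l : Fin (2 ^ (2 + 3 * Nat.clog 2 D)) => ((l : ℕ) : ZMod (2 * D))
  let toFin (z : ZMod D) : Fin D := ⟨z.val, z.val_lt⟩
  refine ⟨(relayProtocol n _).recode (ZMod.toFinOfLE (two_mul_le_two_pow_clog D)) dec,
    fun i ℓ => toFin (counterRead i (dec ∘ ℓ)), fun _ _ _ _ => rfl, fun i ℓ ℓ' h => ?_,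
    fun x ℓ0 => ⟨fun t => toFin (blend s(relayOffset x (dec ∘ ℓ0) 0,
      relayOffset x (dec ∘ ℓ0) 1) + t), fun t ht i => ?_, fun t _ => ?_⟩⟩
  · obtain ⟨h₁, h₂⟩ := incoming_eq h
    simp only [counterRead, Function.comp_apply, h₁, h₂]
  · dsimp only
    rw [syncRun, comp_run_recode _ hdec, ← syncRun, counterRead_syncRun hn hodd x _ i (by omega)]
  · simp only [toFin]
    rw [Nat.cast_succ, ← add_assoc, ZMod.val_add, ZMod.val_one_eq_one_mod, Nat.add_mod_mod]
end

section
/- Let k ≥ 1 and let G_n = ([n], E) be a directed graph in which every node has in-degree at most k and out-degree at most k. Then for every n > 8 there exists a Boolean function f : {0,1}^n → {0,1} such that every output-stabilizing stateless protocol on G_n that computes f has label complexity L_n = log₂|Σ| ≥ n/(4k). -/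
/-!
Everything a stateless protocol does is determined by its local rules: the reaction of each
node restricted to the labels of its own incoming and outgoing edges. With `m` labels and
degrees at most `k`, a node has at most `(2 m^k)^(2 m^k)` local rules, so at most
`(2 m^k)^(2 m^k n) < 2^(2^n - n)` Boolean functions are computable when `m^(4k) < 2^n`.
Summing over the fewer than `2^n` such `m` leaves fewer than `2^(2^n)` functions, so some
function forces `m^(4k) ≥ 2^n`, i.e. `log₂ m ≥ n / (4k)`.
-/

open Finset

theorem pow_four_mul_le_two_pow {n : ℕ} (hn : 9 ≤ n) : (n * (n + 6)) ^ 4 ≤ 2 ^ (3 * n + 4) := by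
  induction n, hn using Nat.le_induction with
  | base => norm_num
  | succ n hn ih =>
    have h : 2 * ((n + 1) * (n + 1 + 6)) ≤ 3 * (n * (n + 6)) := by nlinarith
    have h4 : 16 * ((n + 1) * (n + 1 + 6)) ^ 4 ≤ 81 * (n * (n + 6)) ^ 4 := by
      calc 16 * ((n + 1) * (n + 1 + 6)) ^ 4 = (2 * ((n + 1) * (n + 1 + 6))) ^ 4 := by ring
        _ ≤ (3 * (n * (n + 6))) ^ 4 := Nat.pow_le_pow_left h 4
        _ = 81 * (n * (n + 6)) ^ 4 := by ring
    calc ((n + 1) * (n + 1 + 6)) ^ 4 ≤ 8 * (n * (n + 6)) ^ 4 := by omega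
      _ ≤ 8 * 2 ^ (3 * n + 4) := by omega
      _ = 2 ^ (3 * (n + 1) + 4) := by ring

theorem two_mul_pow_lt_two_pow {n a : ℕ} (hn : 9 ≤ n) (ha : 1 ≤ a) (h : a ^ 4 < 2 ^ n) :
    (2 * a) ^ (2 * a * n) < 2 ^ (2 ^ n - n) := by
  have hlin : 2 * a * n * (n + 6) < 4 * 2 ^ n := by
    refine (Nat.pow_lt_pow_iff_left (n := 4) (by norm_num)).1 ?_
    calc (2 * a * n * (n + 6)) ^ 4 = 16 * a ^ 4 * (n * (n + 6)) ^ 4 := by ring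
      _ < 16 * 2 ^ n * (n * (n + 6)) ^ 4 := by
        have : 0 < n * (n + 6) := by positivity
        gcongr
      _ ≤ 16 * 2 ^ n * 2 ^ (3 * n + 4) := Nat.mul_le_mul_left _ (pow_four_mul_le_two_pow hn)
      _ = (4 * 2 ^ n) ^ 4 := by ring
  have hexp : 2 * a * n * (n + 4) < 4 * (2 ^ n - n) := by
    have : n ≤ 2 ^ n := Nat.lt_two_pow_self.le
    have : 2 * a * n * (n + 4) + 4 * n ≤ 2 * a * n * (n + 6) := by nlinarith
    omega
  refine (Nat.pow_lt_pow_iff_left (n := 4) (by norm_num)).1 ?_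
  calc ((2 * a) ^ (2 * a * n)) ^ 4 = ((2 * a) ^ 4) ^ (2 * a * n) := by
        rw [pow_right_comm]
    _ ≤ (2 ^ (n + 4)) ^ (2 * a * n) := by
        refine Nat.pow_le_pow_left ?_ _
        calc (2 * a) ^ 4 = 16 * a ^ 4 := by ring
          _ ≤ 16 * 2 ^ n := by omega
          _ = 2 ^ (n + 4) := by ring
    _ = 2 ^ (2 * a * n * (n + 4)) := by rw [← pow_mul, mul_comm]
    _ < 2 ^ (4 * (2 ^ n - n)) := Nat.pow_lt_pow_right (by norm_num) hexp
    _ = (2 ^ (2 ^ n - n)) ^ 4 := by rw [← pow_mul, mul_comm]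

theorem div_le_logb_two_of_two_pow_le {n c m : ℕ} (h : 2 ^ n ≤ m ^ c) :
    (n : ℝ) / c ≤ Real.logb 2 m := by
  rcases c.eq_zero_or_pos with rfl | hc
  · rw [Nat.cast_zero, div_zero]
    exact div_nonneg (Real.log_natCast_nonneg m) (Real.log_nonneg one_le_two)
  have hpos : (0 : ℝ) < (m : ℝ) ^ c := by exact_mod_cast (Nat.two_pow_pos n).trans_le h
  rw [div_le_iff₀ (by positivity), mul_comm, ← Real.logb_pow]
  calc (n : ℝ) = Real.logb 2 ((2 : ℝ) ^ n) := by
        rw [Real.logb_pow, Real.logb_self_eq_one one_lt_two, mul_one]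
    _ ≤ Real.logb 2 ((m : ℝ) ^ c) :=
      Real.logb_le_logb_of_le (by norm_num) (by positivity) (by exact_mod_cast h)

namespace StatelessProtocol

variable {n : ℕ} {E : Finset (Fin n × Fin n)} {Λ Λ' : Type}

abbrev InEdge (E : Finset (Fin n × Fin n)) (i : Fin n) : Type := {e : {e // e ∈ E} // e.1.2 = i}

abbrev OutEdge (E : Finset (Fin n × Fin n)) (i : Fin n) : Type := {e : {e // e ∈ E} // e.1.1 = i}

abbrev LocalRule (E : Finset (Fin n × Fin n)) (Λ : Type) (i : Fin n) : Type :=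
  (InEdge E i → Λ) × Bool → (OutEdge E i → Λ) × Bool

theorem card_inEdge (i : Fin n) : Fintype.card (InEdge E i) = #(E.filter (·.2 = i)) := by
  classical
  rw [Fintype.card_congr (Equiv.subtypeSubtypeEquivSubtypeInter (· ∈ E) (·.2 = i)),
    Fintype.card_subtype]
  congr 1; ext; simp

theorem card_outEdge (i : Fin n) : Fintype.card (OutEdge E i) = #(E.filter (·.1 = i)) := by
  classical
  rw [Fintype.card_congr (Equiv.subtypeSubtypeEquivSubtypeInter (· ∈ E) (·.1 = i)),
    Fintype.card_subtype]
  congr 1; ext; simp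

theorem card_localRule_le [Fintype Λ] [DecidableEq Λ] [Nonempty Λ] {k : ℕ} (i : Fin n)
    (hin : Fintype.card (InEdge E i) ≤ k) (hout : Fintype.card (OutEdge E i) ≤ k) :
    Fintype.card (LocalRule E Λ i) ≤ (2 * Fintype.card Λ ^ k) ^ (2 * Fintype.card Λ ^ k) := by
  have hΛ : 1 ≤ Fintype.card Λ := Fintype.card_pos
  have hbound {d : ℕ} (hd : d ≤ k) : Fintype.card Λ ^ d * 2 ≤ 2 * Fintype.card Λ ^ k := by
    rw [mul_comm]; gcongr
  simp only [LocalRule, Fintype.card_fun, Fintype.card_prod, Fintype.card_bool]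
  calc _ ≤ (2 * Fintype.card Λ ^ k) ^ (Fintype.card Λ ^ Fintype.card (InEdge E i) * 2) :=
        Nat.pow_le_pow_left (hbound hout) _
    _ ≤ _ := Nat.pow_le_pow_right (by positivity) (hbound hin)

/-- The labels off the incoming edges of `i` are arbitrary; `react_local` makes them irrelevant. -/
noncomputable def extendLabeling [Nonempty Λ] (i : Fin n) (v : InEdge E i → Λ) :
    {e // e ∈ E} → Λ :=
  fun e => if h : e.1.2 = i then v ⟨e, h⟩ else Classical.arbitrary Λ

noncomputable def localRule [Nonempty Λ] (P : StatelessProtocol n E Λ) (i : Fin n) :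
    LocalRule E Λ i :=
  fun vb => Prod.map (fun ℓ e => ℓ e.1) id (P.react i (extendLabeling i vb.1) vb.2)

theorem react_extendLabeling [Nonempty Λ] (P : StatelessProtocol n E Λ) (i : Fin n)
    (ℓ : {e // e ∈ E} → Λ) (b : Bool) :
    P.react i (extendLabeling i fun e => ℓ e.1) b = P.react i ℓ b :=
  P.react_local i _ _ b fun e he => by simp [extendLabeling, he]

theorem syncRun_succ_apply [Nonempty Λ] (P : StatelessProtocol n E Λ) (x : Fin n → Bool)
    (ℓ0 : {e // e ∈ E} → Λ) (t : ℕ) (e : {e // e ∈ E}) :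
    P.syncRun x ℓ0 (t + 1) e =
      (P.localRule e.1.1 (fun e' => P.syncRun x ℓ0 t e'.1, x e.1.1)).1 ⟨e, rfl⟩ := by
  simp [syncRun, run, localRule, react_extendLabeling]

theorem syncOut_succ_apply [Nonempty Λ] (P : StatelessProtocol n E Λ) (x : Fin n → Bool)
    (ℓ0 : {e // e ∈ E} → Λ) (t : ℕ) (i : Fin n) :
    P.syncOut x ℓ0 (t + 1) i = (P.localRule i (fun e' => P.syncRun x ℓ0 t e'.1, x i)).2 := by
  simp [syncOut, localRule, react_extendLabeling]

section Determinism

variable [Nonempty Λ] {P Q : StatelessProtocol n E Λ}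

theorem syncRun_eq_of_localRule_eq (h : P.localRule = Q.localRule) (x : Fin n → Bool)
    (ℓ0 : {e // e ∈ E} → Λ) : P.syncRun x ℓ0 = Q.syncRun x ℓ0 := by
  funext t
  induction t with
  | zero => rfl
  | succ t ih => funext e; rw [syncRun_succ_apply, syncRun_succ_apply, h, ih]

theorem syncOut_eq_of_localRule_eq (h : P.localRule = Q.localRule) (x : Fin n → Bool)
    (ℓ0 : {e // e ∈ E} → Λ) : P.syncOut x ℓ0 = Q.syncOut x ℓ0 := by
  funext t i
  cases t with
  | zero => rfl
  | succ t =>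
    rw [syncOut_succ_apply, syncOut_succ_apply, h, syncRun_eq_of_localRule_eq h]

theorem Computes.eq_of_localRule_eq [NeZero n] {f g : (Fin n → Bool) → Bool}
    (hP : P.Computes f) (h : P.localRule = Q.localRule) (hQ : Q.Computes g) : f = g := by
  funext x
  let ℓ0 : {e // e ∈ E} → Λ := fun _ => Classical.arbitrary Λ
  obtain ⟨T, hT⟩ := hP x ℓ0
  obtain ⟨T', hT'⟩ := hQ x ℓ0
  rw [← hT (max T T') (le_max_left ..) 0, ← hT' (max T T') (le_max_right ..) 0,
    syncOut_eq_of_localRule_eq h]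

end Determinism

def mapLabels (e : Λ ≃ Λ') (P : StatelessProtocol n E Λ) : StatelessProtocol n E Λ' where
  react i ℓ b := Prod.map (e ∘ ·) id (P.react i (e.symm ∘ ℓ) b)
  react_local i ℓ ℓ' b h := by
    rw [P.react_local i _ (e.symm ∘ ℓ') b fun a ha => by simp [h a ha]]

theorem syncRun_mapLabels (e : Λ ≃ Λ') (P : StatelessProtocol n E Λ) (x : Fin n → Bool)
    (ℓ0 : {e // e ∈ E} → Λ') (t : ℕ) :
    (P.mapLabels e).syncRun x ℓ0 t = e ∘ P.syncRun x (e.symm ∘ ℓ0) t := by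
  induction t with
  | zero => funext a; simp [syncRun, run]
  | succ t ih =>
    funext a
    simp only [syncRun, run, mem_univ, if_true] at ih ⊢
    rw [ih]
    simp [mapLabels, Function.comp_def]

theorem syncOut_mapLabels (e : Λ ≃ Λ') (P : StatelessProtocol n E Λ) (x : Fin n → Bool)
    (ℓ0 : {e // e ∈ E} → Λ') : (P.mapLabels e).syncOut x ℓ0 = P.syncOut x (e.symm ∘ ℓ0) := by
  funext t i
  cases t with
  | zero => rfl
  | succ t =>
    show ((P.mapLabels e).react i ((P.mapLabels e).syncRun x ℓ0 t) (x i)).2 = _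
    rw [syncRun_mapLabels]
    simp [mapLabels, syncOut, Function.comp_def]

theorem Computes.mapLabels {P : StatelessProtocol n E Λ} {f : (Fin n → Bool) → Bool}
    (hP : P.Computes f) (e : Λ ≃ Λ') : (P.mapLabels e).Computes f := by
  intro x ℓ0
  obtain ⟨T, hT⟩ := hP x (e.symm ∘ ℓ0)
  exact ⟨T, fun t ht => by rw [syncOut_mapLabels]; exact hT t ht⟩

open Classical in
noncomputable def computableFns (E : Finset (Fin n × Fin n)) (Λ : Type) :
    Finset ((Fin n → Bool) → Bool) :=
  {f | ∃ P : StatelessProtocol n E Λ, P.Computes f}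

theorem mem_computableFns {f : (Fin n → Bool) → Bool} :
    f ∈ computableFns E Λ ↔ ∃ P : StatelessProtocol n E Λ, P.Computes f := by
  simp [computableFns]

theorem card_computableFns_le [Fintype Λ] [DecidableEq Λ] [Nonempty Λ] [NeZero n] :
    #(computableFns E Λ) ≤ Fintype.card (∀ i, LocalRule E Λ i) := by
  have hP (f : computableFns E Λ) := mem_computableFns.1 f.2
  calc #(computableFns E Λ) = Fintype.card (computableFns E Λ) := (Fintype.card_coe _).symm
    _ ≤ _ := Fintype.card_le_of_injective (fun f => (hP f).choose.localRule) fun f g h =>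
      Subtype.ext ((hP f).choose_spec.eq_of_localRule_eq h (hP g).choose_spec)

theorem card_computableFns_le_pow [Fintype Λ] [Nonempty Λ] [NeZero n] {k : ℕ}
    (hdeg : ∀ i, #(E.filter (·.1 = i)) ≤ k ∧ #(E.filter (·.2 = i)) ≤ k) :
    #(computableFns E Λ) ≤ (2 * Fintype.card Λ ^ k) ^ (2 * Fintype.card Λ ^ k * n) := by
  classical
  calc #(computableFns E Λ) ≤ ∏ i, Fintype.card (LocalRule E Λ i) := by
        rw [← Fintype.card_pi]; exact card_computableFns_le
    _ ≤ ((2 * Fintype.card Λ ^ k) ^ (2 * Fintype.card Λ ^ k)) ^ n := by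
        have hloc (i : Fin n) := card_localRule_le (Λ := Λ) i
          ((card_inEdge i).trans_le (hdeg i).2) ((card_outEdge i).trans_le (hdeg i).1)
        simpa using prod_le_pow_card univ _ _ fun i _ => hloc i
    _ = _ := by rw [← pow_mul]

theorem exists_forall_notMem_computableFns {k : ℕ} (hk : 1 ≤ k)
    (hn : 9 ≤ n) (hdeg : ∀ i, #(E.filter (·.1 = i)) ≤ k ∧ #(E.filter (·.2 = i)) ≤ k) :
    ∃ f, ∀ s : ℕ, (s + 1) ^ (4 * k) < 2 ^ n → f ∉ computableFns E (Fin (s + 1)) := by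
  classical
  have : NeZero n := ⟨by omega⟩
  set S := (range (2 ^ n)).filter fun s => (s + 1) ^ (4 * k) < 2 ^ n
  have hS : 0 ∈ S := mem_filter.2 ⟨mem_range.2 (Nat.two_pow_pos n), by
    rw [zero_add, one_pow]; exact Nat.one_lt_two_pow (by omega)⟩
  have hterm : ∀ s ∈ S, #(computableFns E (Fin (s + 1))) < 2 ^ (2 ^ n - n) := by
    intro s hs
    have ha : ((s + 1) ^ k) ^ 4 < 2 ^ n := by rw [← pow_mul, mul_comm]; exact (mem_filter.1 hs).2
    have hcount := card_computableFns_le_pow (Λ := Fin (s + 1)) hdeg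
    rw [Fintype.card_fin] at hcount
    exact hcount.trans_lt (two_mul_pow_lt_two_pow hn (Nat.one_le_pow _ _ s.succ_pos) ha)
  have hcard : #(S.biUnion fun s => computableFns E (Fin (s + 1))) <
      #(univ : Finset ((Fin n → Bool) → Bool)) :=
    calc _ ≤ ∑ s ∈ S, #(computableFns E (Fin (s + 1))) := card_biUnion_le
      _ < ∑ s ∈ S, 2 ^ (2 ^ n - n) := sum_lt_sum_of_nonempty ⟨0, hS⟩ hterm
      _ ≤ 2 ^ n * 2 ^ (2 ^ n - n) := by
        rw [sum_const, smul_eq_mul]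
        exact Nat.mul_le_mul_right _ ((card_filter_le _ _).trans (card_range _).le)
      _ = _ := by rw [← pow_add, Nat.add_sub_cancel' Nat.lt_two_pow_self.le]; simp
  obtain ⟨f, -, hf⟩ := exists_mem_notMem_of_card_lt_card hcard
  refine ⟨f, fun s hs hfs => hf (mem_biUnion.2 ⟨s, mem_filter.2 ⟨mem_range.2 ?_, hs⟩, hfs⟩)⟩
  calc s < s + 1 := s.lt_succ_self
    _ ≤ (s + 1) ^ (4 * k) := Nat.le_self_pow (by omega) _
    _ < 2 ^ n := hs

end StatelessProtocol

open StatelessProtocol in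
/-- On any directed graph on `n > 8` nodes with in-degree and
out-degree at most `k`, some Boolean function requires label complexity
`log₂|Σ| ≥ n / (4k)` from every output-stabilizing stateless protocol computing
it. -/
theorem exists_hard_function (n k : ℕ) (hk : 1 ≤ k) (hn : 8 < n)
    (E : Finset (Fin n × Fin n))
    (hdeg : ∀ i : Fin n, (E.filter (fun e => e.1 = i)).card ≤ k ∧
      (E.filter (fun e => e.2 = i)).card ≤ k) :
    ∃ f : (Fin n → Bool) → Bool,
      ∀ (Λ : Type) [Fintype Λ] [Nonempty Λ] (P : StatelessProtocol n E Λ),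
        P.OutputStabilizing → P.Computes f →
        (n : ℝ) / (4 * k) ≤ Real.logb 2 (Fintype.card Λ) := by
  obtain ⟨f, hf⟩ := exists_forall_notMem_computableFns hk hn hdeg
  refine ⟨f, fun Λ _ _ P _ hP => ?_⟩
  obtain ⟨s, hs⟩ : ∃ s, Fintype.card Λ = s + 1 :=
    Nat.exists_eq_add_one_of_ne_zero Fintype.card_ne_zero
  have hmem : f ∈ computableFns E (Fin (s + 1)) :=
    mem_computableFns.2 ⟨_, hP.mapLabels ((Fintype.equivFin Λ).trans (finCongr hs))⟩
  have hpow : 2 ^ n ≤ Fintype.card Λ ^ (4 * k) := not_lt.1 fun h => hf s (by rwa [hs] at h) hmem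
  exact_mod_cast div_le_logb_two_of_two_pow_le hpow
end
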